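/- Let h be a Gamma random variable with integer shape μ ≥ 1 and scale 1/μ (so E[h] = 1), and let η = μ·(μ!)^{−1/μ}. Then for every t ≥ 0, P(h > t) ≤ Σ_{ξ=1}^{μ} (−1)^{ξ+1} C(μ,ξ) exp(−η ξ t), i.e., 1 − (1 − e^{−ηt})^{μ} ≥ P(h > t). -/

import Mathlib

/-
Choose `η` with `ηᵐ = mᵐ / m!`. Then the `Gamma(m, m)` density `m ηᵐ uᵐ⁻¹ e^{-mu}` equals
`H'(u) e^{g(u)}`, where `H(u) = (1 - e^{-ηu})ᵐ` and `g(u) = (m - 1) ψ(ηu) + (η - m) u` with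
`ψ(x) = log (x / (1 - e⁻ˣ))`. Since `ψ'(x) = 1/x - 1/(eˣ - 1)` is decreasing (this is
`x ≤ 2 sinh (x/2)`), `g` is concave on `[0, ∞)` with `g(0) = 0`, so it is nonnegative up to some
point and nonpositive after it. Hence `F - H`, with `F` the distribution function, first increases
and then decreases; it vanishes at `0` and at `∞`, so `H ≤ F`. The alternating sum is the binomial
expansion of `1 - (1 - e^{-ηt})ᵐ`.
-/

open Real MeasureTheory ProbabilityTheory Set Filter Topology

theorem sq_mul_exp_le_sq_exp_sub_one {x : ℝ} (hx : 0 ≤ x) : x ^ 2 * exp x ≤ (exp x - 1) ^ 2 := by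
  have hsinh : x ≤ 2 * sinh (x / 2) := by linarith [self_le_sinh_iff.2 (by positivity : 0 ≤ x / 2)]
  have hsq : exp x = exp (x / 2) ^ 2 := by rw [← exp_nat_mul]; ring_nf
  have hfactor : exp x - 1 = 2 * sinh (x / 2) * exp (x / 2) := by
    have : exp (-(x / 2)) * exp (x / 2) = 1 := by rw [← exp_add]; simp
    rw [sinh_eq, hsq]
    linear_combination this
  rw [hfactor, hsq, mul_pow]
  gcongr

theorem antitoneOn_inv_sub_inv_exp_sub_one :
    AntitoneOn (fun x : ℝ => x⁻¹ - (exp x - 1)⁻¹) (Ioi 0) := by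
  have hderiv : ∀ x ∈ Ioi (0 : ℝ), HasDerivAt (fun x : ℝ => x⁻¹ - (exp x - 1)⁻¹)
      (-(x ^ 2)⁻¹ + exp x / (exp x - 1) ^ 2) x := fun x (hx : 0 < x) => by
    have hexp : exp x - 1 ≠ 0 := (sub_pos.2 (one_lt_exp_iff.2 hx)).ne'
    refine ((hasDerivAt_inv hx.ne').sub (((hasDerivAt_exp x).sub_const 1).inv hexp)).congr_deriv ?_
    ring
  refine antitoneOn_of_hasDerivWithinAt_nonpos (f' := fun x => -(x ^ 2)⁻¹ + exp x / (exp x - 1) ^ 2)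
    (convex_Ioi 0) (fun x hx => (hderiv x hx).continuousAt.continuousWithinAt) ?_ ?_
  · simpa only [interior_Ioi] using fun x hx => (hderiv x hx).hasDerivWithinAt
  · rw [interior_Ioi]
    intro x (hx : 0 < x)
    have hexp : 0 < exp x - 1 := sub_pos.2 (one_lt_exp_iff.2 hx)
    have : exp x / (exp x - 1) ^ 2 ≤ (x ^ 2)⁻¹ := by
      rw [div_le_iff₀ (by positivity), ← div_eq_inv_mul, le_div_iff₀ (by positivity)]
      linarith [sq_mul_exp_le_sq_exp_sub_one hx.le]
    linarith

theorem ConcaveOn.nonneg_on_Ioo_or_nonpos_on_Ioi {g : ℝ → ℝ} (hg : ConcaveOn ℝ (Ici 0) g)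
    (h0 : g 0 = 0) {t : ℝ} (ht : 0 ≤ t) :
    (∀ u ∈ Ioo 0 t, 0 ≤ g u) ∨ ∀ u ∈ Ioi t, g u ≤ 0 := by
  have hchord : ∀ a b, 0 ≤ a → a < b → a * g b ≤ b * g a := by
    intro a b ha hab
    have hb : 0 < b := ha.trans_lt hab
    have := hg.2 self_mem_Ici (show b ∈ Ici 0 from hb.le)
      (sub_nonneg.2 ((div_le_one hb).2 hab.le)) (div_nonneg ha hb.le) (by ring)
    simp only [smul_eq_mul, mul_zero, zero_add, h0, div_mul_cancel₀ a hb.ne'] at this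
    rw [div_mul_eq_mul_div, div_le_iff₀ hb] at this
    linarith
  by_cases hgt : 0 ≤ g t
  · exact Or.inl fun u ⟨hu, hut⟩ => by
      nlinarith [hchord u t hu.le hut, mul_nonneg hu.le hgt]
  · refine Or.inr fun u (htu : t < u) => ?_
    have ht' : 0 < t := ht.lt_of_ne (by rintro rfl; exact hgt h0.ge)
    nlinarith [hchord t u ht htu]

theorem nonneg_of_deriv_nonneg_on_Ioo_or_nonpos_on_Ioi {D : ℝ → ℝ} (hD : Differentiable ℝ D)
    (h0 : D 0 = 0) (hlim : Tendsto D atTop (𝓝 0)) {t : ℝ} (ht : 0 ≤ t)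
    (hsign : (∀ u ∈ Ioo 0 t, 0 ≤ deriv D u) ∨ ∀ u ∈ Ioi t, deriv D u ≤ 0) : 0 ≤ D t := by
  rcases hsign with hinc | hdec
  · have hmono : MonotoneOn D (Icc 0 t) :=
      monotoneOn_of_deriv_nonneg (convex_Icc 0 t) hD.continuous.continuousOn
        hD.differentiableOn (by rwa [interior_Icc])
    simpa [h0] using hmono (left_mem_Icc.2 ht) (right_mem_Icc.2 ht) ht
  · have hanti : AntitoneOn D (Ici t) :=
      antitoneOn_of_deriv_nonpos (convex_Ici t) hD.continuous.continuousOn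
        hD.differentiableOn (by rwa [interior_Ici])
    exact le_of_tendsto hlim
      ((eventually_ge_atTop t).mono fun u hu => hanti self_mem_Ici hu hu)

theorem sum_Icc_neg_one_pow_mul_choose_mul_pow {R : Type*} [CommRing R] (m : ℕ) (x : R) :
    ∑ k ∈ Finset.Icc 1 m, (-1) ^ (k + 1) * (m.choose k : R) * x ^ k = 1 - (1 - x) ^ m := by
  rw [sub_eq_neg_add 1 x, add_pow, Finset.range_eq_Ico,
    Finset.sum_eq_sum_Ico_succ_bot (Nat.succ_pos m)]
  simp only [pow_zero, one_pow, mul_one, Nat.choose_zero_right, Nat.cast_one,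
    sub_add_cancel_left, ← Finset.sum_neg_distrib]
  refine Finset.sum_congr rfl fun k _ => ?_
  rw [neg_pow, pow_succ]
  ring

namespace ProbabilityTheory

theorem gammaPDFReal_natCast {m : ℕ} (hm : 1 ≤ m) (r : ℝ) {x : ℝ} (hx : 0 ≤ x) :
    gammaPDFReal m r x = r ^ m / (m - 1).factorial * x ^ (m - 1) * exp (-(r * x)) := by
  obtain ⟨k, rfl⟩ := Nat.exists_eq_add_of_le' hm
  rw [gammaPDFReal, if_pos hx, Nat.add_sub_cancel, Nat.cast_add_one, Gamma_nat_eq_factorial,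
    add_sub_cancel_right, rpow_natCast, ← Nat.cast_add_one, rpow_natCast]

theorem cdf_gammaMeasure_natCast {m : ℕ} (hm : 1 ≤ m) {r : ℝ} (hr : 0 < r) {t : ℝ}
    (ht : 0 ≤ t) :
    cdf (gammaMeasure m r) t =
      ∫ x in 0..t, r ^ m / (m - 1).factorial * x ^ (m - 1) * exp (-(r * x)) := by
  have hm' : (0 : ℝ) < m := by exact_mod_cast hm
  rw [cdf_gammaMeasure_eq_integral hm' hr, intervalIntegral.integral_of_le ht,
    ← integral_Icc_eq_integral_Ioc,
    setIntegral_eq_of_subset_of_forall_sdiff_eq_zero measurableSet_Iic Icc_subset_Iic_self]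
  · exact setIntegral_congr_fun measurableSet_Icc fun x hx => gammaPDFReal_natCast hm r hx.1
  · intro x ⟨hxt, hx⟩
    have hx0 : x < 0 := by
      by_contra! h; exact hx ⟨h, hxt⟩
    simp [gammaPDFReal, hx0.not_ge]

theorem measure_Ioi_eq_ofReal_one_sub_cdf (μ : Measure ℝ) [IsProbabilityMeasure μ] (t : ℝ) :
    μ (Ioi t) = ENNReal.ofReal (1 - cdf μ t) := by
  rw [← compl_Iic, prob_compl_eq_one_sub measurableSet_Iic, cdf_eq_real, measureReal_def,
    ENNReal.ofReal_sub _ ENNReal.toReal_nonneg, ENNReal.ofReal_one,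
    ENNReal.ofReal_toReal (measure_ne_top _ _)]

end ProbabilityTheory

namespace Alzer

/-- At `x = 0` the junk value `log 0 = 0` gives `ψ 0 = 0`, which is also the limit at `0⁺`. -/
noncomputable def ψ (x : ℝ) : ℝ := log x - log (1 - exp (-x))

@[simp] theorem ψ_zero : ψ 0 = 0 := by simp [ψ]

theorem hasDerivAt_ψ {x : ℝ} (hx : 0 < x) : HasDerivAt ψ (x⁻¹ - (exp x - 1)⁻¹) x := by
  have hpos : 0 < 1 - exp (-x) := sub_pos.2 (exp_lt_one_iff.2 (neg_lt_zero.2 hx))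
  have hinner : HasDerivAt (fun y => 1 - exp (-y)) (exp (-x)) x := by
    simpa using ((hasDerivAt_neg x).exp).const_sub 1
  refine ((hasDerivAt_log hx.ne').sub (hinner.log hpos.ne')).congr_deriv ?_
  have hexp : exp x - 1 ≠ 0 := (sub_pos.2 (one_lt_exp_iff.2 hx)).ne'
  rw [exp_neg] at hpos ⊢
  field_simp

theorem continuousOn_ψ : ContinuousOn ψ (Ici 0) := by
  intro x (hx : 0 ≤ x)
  rcases hx.eq_or_lt with rfl | hx
  · set e : ℝ → ℝ := fun y => 1 - exp (-y)
    have he : HasDerivAt e 1 0 := by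
      simpa using ((hasDerivAt_neg (0 : ℝ)).exp).const_sub 1
    -- on `Ici 0`, `ψ` is `-log` of the difference quotient of `e` at `0`, which is continuous
    have hslope : ContinuousAt (fun y => -log (dslope e 0 y)) 0 := by
      refine (ContinuousAt.log (continuousAt_dslope_same.2 he.differentiableAt) ?_).neg
      simp [dslope_same, he.deriv]
    refine (hslope.continuousWithinAt.congr (fun y (hy : 0 ≤ y) => ?_) ?_)
    · rcases hy.eq_or_lt with rfl | hy
      · simp [dslope_same, he.deriv]
      · have hpos : 0 < 1 - exp (-y) := sub_pos.2 (exp_lt_one_iff.2 (neg_lt_zero.2 hy))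
        rw [dslope_of_ne _ hy.ne', slope_def_field]
        simp only [e, neg_zero, exp_zero, sub_self, sub_zero]
        rw [ψ, log_div hpos.ne' hy.ne']
        ring
    · simp [dslope_same, he.deriv]
  · exact (hasDerivAt_ψ hx).continuousAt.continuousWithinAt

theorem concaveOn_ψ : ConcaveOn ℝ (Ici 0) ψ := by
  refine AntitoneOn.concaveOn_of_deriv (convex_Ici 0) continuousOn_ψ ?_ ?_ <;> rw [interior_Ici]
  · exact fun x hx => (hasDerivAt_ψ hx).differentiableAt.differentiableWithinAt
  · refine antitoneOn_inv_sub_inv_exp_sub_one.congr fun x hx => ?_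
    exact ((hasDerivAt_ψ hx).deriv).symm

/-- The logarithm of the ratio of the Erlang density `m ηᵐ uᵐ⁻¹ e^{-mu}` to the derivative of
`(1 - e^{-ηu})ᵐ`. -/
noncomputable def logDensityRatio (η : ℝ) (m : ℕ) (u : ℝ) : ℝ :=
  (m - 1 : ℕ) * ψ (η * u) + (η - m) * u

theorem concaveOn_logDensityRatio {η : ℝ} (hη : 0 ≤ η) (m : ℕ) :
    ConcaveOn ℝ (Ici 0) (logDensityRatio η m) := by
  have hscaled : ConcaveOn ℝ (Ici 0) (fun u => ψ (η * u)) :=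
    (concaveOn_ψ.comp_linearMap (LinearMap.mul ℝ ℝ η)).subset
      (fun u (hu : 0 ≤ u) => mul_nonneg hη hu) (convex_Ici 0)
  exact (hscaled.smul (Nat.cast_nonneg _)).add
    ((LinearMap.mul ℝ ℝ (η - m)).concaveOn (convex_Ici 0))

@[simp] theorem logDensityRatio_zero (η : ℝ) (m : ℕ) : logDensityRatio η m 0 = 0 := by
  simp [logDensityRatio]

theorem density_eq_deriv_mul_exp_logDensityRatio {η u : ℝ} (hη : 0 < η) (hu : 0 < u) (m : ℕ) :
    m * η ^ m * u ^ (m - 1) * exp (-(m * u)) =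
      m * (1 - exp (-(η * u))) ^ (m - 1) * (η * exp (-(η * u))) *
        exp (logDensityRatio η m u) := by
  have hpos : 0 < 1 - exp (-(η * u)) :=
    sub_pos.2 (exp_lt_one_iff.2 (neg_lt_zero.2 (mul_pos hη hu)))
  have hexp : exp (logDensityRatio η m u) =
      (η * u / (1 - exp (-(η * u)))) ^ (m - 1) * exp ((η - m) * u) := by
    rw [logDensityRatio, exp_add, exp_nat_mul, ψ, exp_sub, exp_log (mul_pos hη hu),
      exp_log hpos]
  have hshift : exp (-(η * u)) * exp ((η - m) * u) = exp (-(m * u)) := by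
    rw [← exp_add]; ring_nf
  rw [hexp]
  rcases m with _ | m
  · simp
  · rw [Nat.add_sub_cancel, div_pow, pow_succ, mul_pow, ← hshift]
    field_simp

theorem hasDerivAt_one_sub_exp_neg_pow (η : ℝ) (m : ℕ) (u : ℝ) :
    HasDerivAt (fun u => (1 - exp (-(η * u))) ^ m)
      (m * (1 - exp (-(η * u))) ^ (m - 1) * (η * exp (-(η * u)))) u := by
  have hinner : HasDerivAt (fun u => 1 - exp (-(η * u))) (η * exp (-(η * u))) u := by
    simpa [mul_comm] using (((hasDerivAt_id u).const_mul η).neg.exp).const_sub 1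
  exact hinner.pow m

theorem tendsto_one_sub_exp_neg_pow {η : ℝ} (hη : 0 < η) (m : ℕ) :
    Tendsto (fun u => (1 - exp (-(η * u))) ^ m) atTop (𝓝 1) := by
  have hexp : Tendsto (fun u => exp (-(η * u))) atTop (𝓝 0) :=
    tendsto_exp_neg_atTop_nhds_zero.comp (tendsto_id.const_mul_atTop hη)
  simpa using ((tendsto_const_nhds (x := (1 : ℝ))).sub hexp).pow m

theorem cdf_gammaMeasure_eq_integral_mul_pow {m : ℕ} (hm : 1 ≤ m) {η : ℝ}
    (hnorm : η ^ m = m ^ m / m.factorial) {t : ℝ} (ht : 0 ≤ t) :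
    cdf (gammaMeasure m m) t = ∫ x in 0..t, m * η ^ m * x ^ (m - 1) * exp (-(m * x)) := by
  have hfac : (m.factorial : ℝ) = m * (m - 1).factorial := by
    exact_mod_cast (Nat.mul_factorial_pred (by omega)).symm
  have hdens : (m : ℝ) ^ m / (m - 1).factorial = m * η ^ m := by
    rw [hnorm, hfac]
    field_simp
  rw [cdf_gammaMeasure_natCast hm (Nat.cast_pos.2 hm) ht, hdens]

theorem one_sub_exp_neg_pow_le_cdf_gammaMeasure {m : ℕ} (hm : 1 ≤ m) {η : ℝ} (hη : 0 < η)
    (hnorm : η ^ m = m ^ m / m.factorial) {t : ℝ} (ht : 0 ≤ t) :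
    (1 - exp (-(η * t))) ^ m ≤ cdf (gammaMeasure m m) t := by
  set f : ℝ → ℝ := fun x => m * η ^ m * x ^ (m - 1) * exp (-(m * x))
  set H : ℝ → ℝ := fun u => (1 - exp (-(η * u))) ^ m
  set H' : ℝ → ℝ := fun u => m * (1 - exp (-(η * u))) ^ (m - 1) * (η * exp (-(η * u)))
  have hcdf : ∀ u, 0 ≤ u → cdf (gammaMeasure m m) u = ∫ x in 0..u, f x :=
    fun u hu => cdf_gammaMeasure_eq_integral_mul_pow hm hnorm hu
  set D : ℝ → ℝ := fun u => (∫ x in 0..u, f x) - H u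
  have hD : ∀ u, HasDerivAt D (f u - H' u) u := fun u =>
    ((show Continuous f by fun_prop).integral_hasStrictDerivAt 0 u).hasDerivAt.sub
      (hasDerivAt_one_sub_exp_neg_pow η m u)
  have hlim : Tendsto D atTop (𝓝 0) := by
    have : IsProbabilityMeasure (gammaMeasure m m) :=
      isProbabilityMeasure_gammaMeasure (Nat.cast_pos.2 hm) (Nat.cast_pos.2 hm)
    have hF : Tendsto (fun u => ∫ x in 0..u, f x) atTop (𝓝 1) :=
      (tendsto_cdf_atTop _).congr' ((eventually_ge_atTop 0).mono hcdf)
    simpa using hF.sub (tendsto_one_sub_exp_neg_pow hη m)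
  have hderiv : ∀ u, 0 < u → deriv D u = H' u * (exp (logDensityRatio η m u) - 1) := by
    intro u hu
    rw [(hD u).deriv, mul_sub, mul_one, ← density_eq_deriv_mul_exp_logDensityRatio hη hu]
  have hH' : ∀ u, 0 < u → 0 ≤ H' u := fun u hu => by
    have : exp (-(η * u)) ≤ 1 := exp_le_one_iff.2 (by nlinarith)
    have : 0 ≤ 1 - exp (-(η * u)) := by linarith
    positivity
  have hDt := nonneg_of_deriv_nonneg_on_Ioo_or_nonpos_on_Ioi (fun u => (hD u).differentiableAt)
    (by simp [D, H, Nat.one_le_iff_ne_zero.1 hm]) hlim ht <| by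
    rcases (concaveOn_logDensityRatio hη.le m).nonneg_on_Ioo_or_nonpos_on_Ioi
      (logDensityRatio_zero η m) ht with hpos | hneg
    · refine Or.inl fun u hu => ?_
      rw [hderiv u hu.1]
      exact mul_nonneg (hH' u hu.1) (sub_nonneg.2 (one_le_exp (hpos u hu)))
    · refine Or.inr fun u (hu : t < u) => ?_
      rw [hderiv u (ht.trans_lt hu)]
      exact mul_nonpos_of_nonneg_of_nonpos (hH' u (ht.trans_lt hu))
        (sub_nonpos.2 (exp_le_one_iff.2 (hneg u hu)))
  rw [hcdf t ht]
  linarith [hDt]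

end Alzer

theorem natCast_mul_factorial_rpow_pow {m : ℕ} (hm : 1 ≤ m) :
    ((m : ℝ) * (m.factorial : ℝ) ^ (-(1 : ℝ) / m)) ^ m = m ^ m / m.factorial := by
  have hm' : (m : ℝ) ≠ 0 := by positivity
  rw [mul_pow, ← rpow_natCast ((m.factorial : ℝ) ^ _), ← rpow_mul (by positivity),
    div_mul_cancel₀ _ hm', rpow_neg_one, div_eq_mul_inv]

theorem alzer_gamma_tail_bound (m : ℕ) (hm : 1 ≤ m) (t : ℝ) (ht : 0 ≤ t) :
    gammaMeasure (m : ℝ) (m : ℝ) (Set.Ioi t)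
        ≤ ENNReal.ofReal (∑ ξ ∈ Finset.Icc 1 m,
            (-1 : ℝ) ^ (ξ + 1) * (m.choose ξ : ℝ) *
              Real.exp (-(m * ((m.factorial : ℝ) ^ (-(1 : ℝ) / m))) * ξ * t)) ∧
      gammaMeasure (m : ℝ) (m : ℝ) (Set.Ioi t)
        ≤ ENNReal.ofReal
            (1 - (1 - Real.exp (-(m * ((m.factorial : ℝ) ^ (-(1 : ℝ) / m))) * t)) ^ m) := by
  have hnorm := natCast_mul_factorial_rpow_pow hm
  set η : ℝ := m * (m.factorial : ℝ) ^ (-(1 : ℝ) / m)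
  have hη : 0 < η := by positivity
  have : IsProbabilityMeasure (gammaMeasure m m) :=
    isProbabilityMeasure_gammaMeasure (Nat.cast_pos.2 hm) (Nat.cast_pos.2 hm)
  have hbound : gammaMeasure m m (Ioi t) ≤ ENNReal.ofReal (1 - (1 - exp (-η * t)) ^ m) := by
    rw [measure_Ioi_eq_ofReal_one_sub_cdf, neg_mul]
    exact ENNReal.ofReal_le_ofReal
      (by linarith [Alzer.one_sub_exp_neg_pow_le_cdf_gammaMeasure hm hη hnorm ht])
  refine ⟨?_, hbound⟩
  convert hbound using 2
  rw [← sum_Icc_neg_one_pow_mul_choose_mul_pow]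
  refine Finset.sum_congr rfl fun ξ _ => ?_
  rw [← exp_nat_mul]
  ring_nf
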